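/- Let α > −1 be real, N ≥ 1, let (v_n)_{n≥1} be a sequence of pairwise distinct positive reals, and let (u_n)_{n≥1} be real numbers with u_n = 0 for all but finitely many n. Then lim_{c → 0⁺} det_{1≤i,j≤N}[ Σ_{n=1}^∞ v_n^{i+2j+α−3} · J_{α+i−1}(c v_n) · u_n ] / ∏_{i=1}^N (c/2)^{α+i−1} = ( ∏_{i=1}^N 1/Γ(α+i) ) · det_{1≤i,j≤N}[ Σ_{n=1}^∞ v_n^{2i+2j+2α−4} · u_n ]. -/

import Mathlib

/-!
For `x > 0` the Bessel series factors as `J_β(x) = (x/2)^β g_β((x/2)²)`, where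
`g_β(t) = Σ (-1)^k t^k / (k! Γ(k+β+1))` is continuous at `0` with `g_β(0) = 1/Γ(β+1)`.
Hence row `i` of the Bessel matrix is `(c/2)^(α+i)` times a matrix row that tends, as `c → 0⁺`,
to `1/Γ(α+i+1)` times row `i` of the moment matrix `[Σ v_n^(2i+2j+2α) u_n]`; since `u` has
finite support, all the series are finite sums and the limit passes through them and the
determinant.
-/

open Filter

/-- The Bessel function of the first kind, for `x > 0`,
`J_β(x) = Σ_{k=0}^∞ (-1)^k (x/2)^{2k+β} / (k! Γ(k+β+1))`. -/
noncomputable def besselJ (β x : ℝ) : ℝ :=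
  ∑' k : ℕ, (-1 : ℝ) ^ k * (x / 2) ^ (2 * (k : ℝ) + β) /
    ((Nat.factorial k : ℝ) * Real.Gamma ((k : ℝ) + β + 1))

open Topology
open scoped Nat

noncomputable def besselEntire (β t : ℝ) : ℝ :=
  ∑' k : ℕ, (-1 : ℝ) ^ k * t ^ k / ((k ! : ℝ) * Real.Gamma (k + β + 1))

lemma besselEntire_zero (β : ℝ) : besselEntire β 0 = 1 / Real.Gamma (β + 1) := by
  rw [besselEntire, tsum_eq_single 0 fun k hk => by simp [zero_pow hk]]
  simp

section BesselEntire

variable {β : ℝ}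

lemma natCast_add_add_one_pos (hβ : -1 < β) (k : ℕ) : 0 < (k : ℝ) + β + 1 := by
  linarith [(k.cast_nonneg : (0 : ℝ) ≤ k)]

lemma Gamma_natCast_add_add_one_pos (hβ : -1 < β) (k : ℕ) : 0 < Real.Gamma (k + β + 1) :=
  Real.Gamma_pos_of_pos (natCast_add_add_one_pos hβ k)

lemma factorial_mul_Gamma_succ (hβ : -1 < β) (k : ℕ) :
    ((k + 1) ! : ℝ) * Real.Gamma (↑(k + 1) + β + 1) =
      ((k + 1) * (k + β + 1)) * ((k ! : ℝ) * Real.Gamma (k + β + 1)) := by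
  rw [show (↑(k + 1) : ℝ) + β + 1 = (k + β + 1) + 1 by push_cast; ring,
    Real.Gamma_add_one (natCast_add_add_one_pos hβ k).ne', Nat.factorial_succ]
  push_cast
  ring

lemma summable_inv_factorial_mul_Gamma (hβ : -1 < β) :
    Summable fun k : ℕ => 1 / ((k ! : ℝ) * Real.Gamma (k + β + 1)) := by
  refine summable_of_ratio_norm_eventually_le (r := 1 / 2) (by norm_num) ?_
  filter_upwards [eventually_ge_atTop 1] with k hk
  have hk : (1 : ℝ) ≤ k := by exact_mod_cast hk
  -- consecutive terms differ by the factor `1 / ((k+1)(k+β+1)) ≤ 1/2`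
  have hq : (2 : ℝ) ≤ (k + 1) * (k + β + 1) := by nlinarith
  have hD : 0 < (k ! : ℝ) * Real.Gamma (k + β + 1) :=
    mul_pos (by positivity) (Gamma_natCast_add_add_one_pos hβ k)
  rw [factorial_mul_Gamma_succ hβ]
  generalize (k ! : ℝ) * Real.Gamma (k + β + 1) = D at hD ⊢
  generalize ((k : ℝ) + 1) * (k + β + 1) = q at hq ⊢
  rw [Real.norm_of_nonneg (by positivity), Real.norm_of_nonneg (by positivity), one_div_mul_one_div]
  exact one_div_le_one_div_of_le (by positivity) (by gcongr)

lemma continuousOn_besselEntire (hβ : -1 < β) : ContinuousOn (besselEntire β) (Set.Icc (-1) 1) := by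
  refine continuousOn_tsum (fun k => by fun_prop) (summable_inv_factorial_mul_Gamma hβ) ?_
  intro k t ht
  have hpos : 0 < (k ! : ℝ) * Real.Gamma (k + β + 1) :=
    mul_pos (by positivity) (Gamma_natCast_add_add_one_pos hβ k)
  rw [norm_div, norm_mul, norm_pow, norm_pow, norm_neg, norm_one, one_pow, one_mul,
    Real.norm_of_nonneg hpos.le]
  gcongr
  exact pow_le_one₀ (norm_nonneg t) (abs_le.2 ht)

lemma tendsto_besselEntire_mul_sq (hβ : -1 < β) (w : ℝ) :
    Tendsto (fun c : ℝ => besselEntire β ((c * w / 2) ^ 2)) (𝓝 0)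
      (𝓝 (1 / Real.Gamma (β + 1))) := by
  have hcont : ContinuousAt (besselEntire β) 0 :=
    (continuousOn_besselEntire hβ).continuousAt (Icc_mem_nhds (by norm_num) (by norm_num))
  have hinner : Tendsto (fun c : ℝ => (c * w / 2) ^ 2) (𝓝 0) (𝓝 0) := by
    simpa using (by fun_prop : Continuous fun c : ℝ => (c * w / 2) ^ 2).tendsto 0
  rw [← besselEntire_zero]
  exact hcont.tendsto.comp hinner

end BesselEntire

lemma besselJ_eq_rpow_mul_besselEntire (β : ℝ) {x : ℝ} (hx : 0 < x) :
    besselJ β x = (x / 2) ^ β * besselEntire β ((x / 2) ^ 2) := by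
  rw [besselJ, besselEntire, ← tsum_mul_left]
  refine tsum_congr fun k => ?_
  rw [Real.rpow_add (by positivity), Real.rpow_mul (by positivity), Real.rpow_two,
    Real.rpow_natCast]
  ring

lemma rpow_mul_besselJ_mul (γ β : ℝ) {c w : ℝ} (hc : 0 < c) (hw : 0 < w) :
    w ^ γ * besselJ β (c * w) =
      (c / 2) ^ β * (besselEntire β ((c * w / 2) ^ 2) * w ^ (γ + β)) := by
  rw [besselJ_eq_rpow_mul_besselEntire β (mul_pos hc hw), mul_div_right_comm,
    Real.mul_rpow (by positivity) hw.le, Real.rpow_add hw]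
  ring

lemma tendsto_tsum_mul_of_support_finite {X ι : Type*} {l : Filter X} {u : ι → ℝ}
    (hu : (Function.support u).Finite) {f : X → ι → ℝ} {g : ι → ℝ}
    (hf : ∀ n, Tendsto (fun x => f x n) l (𝓝 (g n))) :
    Tendsto (fun x => ∑' n, f x n * u n) l (𝓝 (∑' n, g n * u n)) := by
  have hsupp : ∀ a : ι → ℝ, Function.support (fun n => a n * u n) ⊆ hu.toFinset := fun a =>
    (Function.support_mul_subset_right _ _).trans hu.coe_toFinset.ge
  simp_rw [tsum_eq_sum' (hsupp _)]
  exact tendsto_finsetSum _ fun n _ => (hf n).mul_const (u n)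

lemma Matrix.tendsto_det_div_prod_of_eq_mul_row {X ι K : Type*} [Fintype ι] [DecidableEq ι]
    [Field K] [TopologicalSpace K] [IsTopologicalRing K] {l : Filter X}
    {A B : X → Matrix ι ι K} {s : X → ι → K} {C : Matrix ι ι K}
    (hA : ∀ᶠ x in l, A x = Matrix.of fun i j => s x i * B x i j)
    (hs : ∀ᶠ x in l, ∀ i, s x i ≠ 0) (hB : Tendsto B l (𝓝 C)) :
    Tendsto (fun x => (A x).det / ∏ i, s x i) l (𝓝 C.det) := by
  refine ((continuous_id.matrix_det.tendsto C).comp hB).congr' ?_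
  filter_upwards [hA, hs] with x hAx hsx
  rw [hAx, Matrix.det_mul_column, mul_div_cancel_left₀ _ (Finset.prod_ne_zero_iff.2 fun i _ => hsx i)]
  rfl

theorem stmt_15_general (α : ℝ) (hα : -1 < α) (N : ℕ)
    (v : ℕ → ℝ) (hvpos : ∀ n, 0 < v n)
    (u : ℕ → ℝ) (hu : (Function.support u).Finite) :
    Filter.Tendsto
      (fun c : ℝ =>
        (Matrix.of fun i j : Fin N =>
          ∑' n : ℕ, v n ^ (((i : ℕ) : ℝ) + 2 * ((j : ℕ) : ℝ) + α) *
            besselJ (α + (i : ℕ)) (c * v n) * u n).det /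
          ∏ i : Fin N, (c / 2) ^ (α + ((i : ℕ) : ℝ)))
      (nhdsWithin 0 (Set.Ioi (0 : ℝ)))
      (nhds ((∏ i : Fin N, 1 / Real.Gamma (α + (i : ℕ) + 1)) *
        (Matrix.of fun i j : Fin N =>
          ∑' n : ℕ, v n ^ (2 * ((i : ℕ) : ℝ) + 2 * ((j : ℕ) : ℝ) + 2 * α) * u n).det)) := by
  have hβ (i : Fin N) : -1 < α + (i : ℕ) := by linarith [(i : ℕ).cast_nonneg (α := ℝ)]
  rw [← Matrix.det_mul_column]
  refine Matrix.tendsto_det_div_prod_of_eq_mul_row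
    (B := fun c => Matrix.of fun i j : Fin N => ∑' n : ℕ,
      besselEntire (α + (i : ℕ)) ((c * v n / 2) ^ 2) *
        v n ^ (2 * ((i : ℕ) : ℝ) + 2 * ((j : ℕ) : ℝ) + 2 * α) * u n) ?_ ?_ ?_
  · filter_upwards [self_mem_nhdsWithin] with c (hc : 0 < c)
    ext i j
    simp only [Matrix.of_apply, ← tsum_mul_left]
    refine tsum_congr fun n => ?_
    rw [rpow_mul_besselJ_mul _ _ hc (hvpos n),
      show ((i : ℕ) : ℝ) + 2 * ((j : ℕ) : ℝ) + α + (α + (i : ℕ)) =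
        2 * ((i : ℕ) : ℝ) + 2 * ((j : ℕ) : ℝ) + 2 * α by ring]
    ring
  · filter_upwards [self_mem_nhdsWithin] with c (hc : 0 < c) i
    exact (Real.rpow_pos_of_pos (half_pos hc) _).ne'
  · refine tendsto_pi_nhds.2 fun i => tendsto_pi_nhds.2 fun j => ?_
    simp only [Matrix.of_apply, ← tsum_mul_left, ← mul_assoc]
    exact tendsto_tsum_mul_of_support_finite hu fun n =>
      ((tendsto_besselEntire_mul_sq (hβ i) (v n)).mono_left nhdsWithin_le_nhds).mul_const _

theorem stmt_15 (α : ℝ) (hα : -1 < α) (N : ℕ) (hN : 1 ≤ N)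
    (v : ℕ → ℝ) (hvinj : Function.Injective v) (hvpos : ∀ n, 0 < v n)
    (u : ℕ → ℝ) (hu : (Function.support u).Finite) :
    Filter.Tendsto
      (fun c : ℝ =>
        (Matrix.of fun i j : Fin N =>
          ∑' n : ℕ, v n ^ (((i : ℕ) : ℝ) + 2 * ((j : ℕ) : ℝ) + α) *
            besselJ (α + (i : ℕ)) (c * v n) * u n).det /
          ∏ i : Fin N, (c / 2) ^ (α + ((i : ℕ) : ℝ)))
      (nhdsWithin 0 (Set.Ioi (0 : ℝ)))
      (nhds ((∏ i : Fin N, 1 / Real.Gamma (α + (i : ℕ) + 1)) *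
        (Matrix.of fun i j : Fin N =>
          ∑' n : ℕ, v n ^ (2 * ((i : ℕ) : ℝ) + 2 * ((j : ℕ) : ℝ) + 2 * α) * u n).det)) :=
  stmt_15_general α hα N v hvpos u hu
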